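/- Suppose $\psi : (0, T] \to [0, \infty)$ is $C^1$ and satisfies $\psi'(t) \le \frac{1}{t}\left(-\frac{1}{C}\psi(t)^2 + C\right)$ for some constant $C > 0$. Then $\psi(t) \le \max\{\psi(t_0), C\}$ for all $t \ge t_0$, and if additionally $\limsup_{t\to 0^+} \psi(t) t = 0$, then $\psi(t) \le C' := \max(C, \sqrt{C^2 + C/ \log 2})$ for all $t \in (0, T]$. -/

import Mathlib

set_option maxHeartbeats 1000000

lemma stmt17_key (T C : ℝ) (hT : 0 < T) (hC : 0 < C)
    (ψ ψ' : ℝ → ℝ)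
    (hderiv : ∀ t ∈ Set.Ioc (0:ℝ) T, HasDerivAt ψ (ψ' t) t)
    (hineq : ∀ t ∈ Set.Ioc (0:ℝ) T, ψ' t ≤ (1/t) * (-(1/C) * (ψ t)^2 + C)) :
    ∀ t ∈ Set.Ioc (0:ℝ) T, ψ t ≤ C := by
  by_contra h
  push_neg at h
  obtain ⟨t₁, ht₁, hψ₁⟩ := h
  obtain ⟨ht₁0, ht₁T⟩ := ht₁
  -- target value strictly between C and ψ t₁
  set b : ℝ := (C + ψ t₁) / 2 with hb
  have hbC : C < b := by rw [hb]; linarith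
  have hbψ : b < ψ t₁ := by rw [hb]; linarith
  have hbpos : 0 < b := lt_trans hC hbC
  set k : ℝ := t₁^2 * (b - C) / (b + C) with hk
  have hkpos : 0 < k := by
    apply div_pos (mul_pos (pow_pos ht₁0 2) (by linarith)) (by linarith)
  have hklt : k < t₁^2 := by
    rw [hk, div_lt_iff₀ (by linarith : (0:ℝ) < b + C)]
    nlinarith [pow_pos ht₁0 2]
  -- the exact (backward blowing-up) solution
  set z : ℝ → ℝ := fun t => C * (t^2 + k) / (t^2 - k) with hz
  have hzpos : ∀ t : ℝ, k < t^2 → 0 < z t := by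
    intro t ht
    exact div_pos (mul_pos hC (by nlinarith)) (by linarith)
  have hzderiv : ∀ t : ℝ, 0 < t → k < t^2 →
      HasDerivAt z ((1/t) * (-(1/C) * (z t)^2 + C)) t := by
    intro t ht hkt
    have hne : t^2 - k ≠ 0 := by nlinarith
    have h1 : HasDerivAt (fun t : ℝ => C * (t^2 + k)) (C * (2*t)) t := by
      have := ((hasDerivAt_pow 2 t).add_const k).const_mul C
      simpa using this
    have h2 : HasDerivAt (fun t : ℝ => t^2 - k) (2*t) t := by
      have := (hasDerivAt_pow 2 t).sub_const k
      simpa using this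
    have hd := h1.div h2 hne
    convert hd using 1
    · rfl
    · rfl
    · rfl
    rw [hz]
    simp only
    field_simp
    ring
  have hzt₁ : z t₁ = b := by
    have hbC0 : (b + C) ≠ 0 := by linarith
    have hne : t₁^2 - k ≠ 0 := by nlinarith
    rw [hz]
    simp only
    rw [div_eq_iff hne, hk]
    field_simp
    ring
  clear_value b k z
  -- √k
  set a : ℝ := Real.sqrt k with ha
  have hapos : 0 < a := Real.sqrt_pos.mpr hkpos
  have hasq : a^2 = k := Real.sq_sqrt hkpos.le
  have hat₁ : a < t₁ := by
    rw [ha]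
    exact (Real.sqrt_lt' ht₁0).mpr hklt
  -- Claim A : on (a, t₁], z < ψ
  have claimA : ∀ r ∈ Set.Ioc a t₁, z r < ψ r := by
    rintro r ⟨har, hrt₁⟩
    by_contra hcon
    push_neg at hcon
    have hsub : Set.Icc r t₁ ⊆ Set.Ioc (0:ℝ) T := fun u hu =>
      ⟨lt_of_lt_of_le (lt_trans hapos har) hu.1, le_trans hu.2 ht₁T⟩
    have hsubk : ∀ u ∈ Set.Icc r t₁, k < u^2 := by
      intro u hu
      have h1 : a < u := lt_of_lt_of_le har hu.1
      nlinarith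
    have hψcont : ContinuousOn ψ (Set.Icc r t₁) := fun u hu =>
      ((hderiv u (hsub hu)).continuousAt).continuousWithinAt
    have hzcont : ContinuousOn z (Set.Icc r t₁) := fun u hu =>
      ((hzderiv u (hsub hu).1 (hsubk u hu)).continuousAt).continuousWithinAt
    set S : Set ℝ := Set.Icc r t₁ ∩ (fun u => ψ u - z u) ⁻¹' (Set.Iic 0) with hSdef
    have hSclosed : IsClosed S := by
      apply ContinuousOn.preimage_isClosed_of_isClosed (hψcont.sub hzcont)
        isClosed_Icc isClosed_Iic
    have hScomp : IsCompact S := isCompact_Icc.of_isClosed_subset hSclosed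
      Set.inter_subset_left
    have hrS : r ∈ S := ⟨⟨le_refl r, hrt₁⟩, by simp [Set.mem_preimage]; linarith⟩
    set s : ℝ := sSup S with hs
    have hsS : s ∈ S := hScomp.sSup_mem ⟨r, hrS⟩
    obtain ⟨⟨hrs, hst₁⟩, hψs⟩ := hsS
    simp only [Set.mem_preimage, Set.mem_Iic] at hψs
    have hst₁lt : s < t₁ := by
      rcases lt_or_eq_of_le hst₁ with h | h
      · exact h
      · exfalso; rw [h] at hψs; rw [hzt₁] at hψs; linarith
    -- on (s, t₁], ψ > z
    have hgt : ∀ u ∈ Set.Ioc s t₁, z u < ψ u := by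
      rintro u ⟨hsu, hut₁⟩
      by_contra hc
      push_neg at hc
      have huS : u ∈ S := ⟨⟨le_trans hrs hsu.le, hut₁⟩, by
        simp only [Set.mem_preimage, Set.mem_Iic]; linarith⟩
      have := le_csSup hScomp.bddAbove huS
      rw [← hs] at this
      linarith
    -- antitone argument on [s, t₁]
    have hant : AntitoneOn (fun u => ψ u - z u) (Set.Icc s t₁) := by
      have hsubs : Set.Icc s t₁ ⊆ Set.Icc r t₁ := Set.Icc_subset_Icc hrs le_rfl
      apply antitoneOn_of_deriv_nonpos (convex_Icc s t₁)
        ((hψcont.sub hzcont).mono hsubs)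
      · intro u hu
        rw [interior_Icc] at hu
        have hu' : u ∈ Set.Icc r t₁ := hsubs ⟨hu.1.le, hu.2.le⟩
        exact ((hderiv u (hsub hu')).sub (hzderiv u (hsub hu').1 (hsubk u hu'))).differentiableAt.differentiableWithinAt
      · intro u hu
        rw [interior_Icc] at hu
        have hu' : u ∈ Set.Icc r t₁ := hsubs ⟨hu.1.le, hu.2.le⟩
        have hd := (hderiv u (hsub hu')).sub (hzderiv u (hsub hu').1 (hsubk u hu'))
        rw [hd.deriv]
        have hzu : z u < ψ u := hgt u ⟨hu.1, hu.2.le⟩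
        have hzu0 : 0 < z u := hzpos u (hsubk u hu')
        have hu0 : 0 < u := (hsub hu').1
        have h1 : ψ' u ≤ (1/u) * (-(1/C) * (ψ u)^2 + C) := hineq u (hsub hu')
        have h2 : (1/u) * (-(1/C) * (ψ u)^2 + C) ≤ (1/u) * (-(1/C) * (z u)^2 + C) := by
          apply mul_le_mul_of_nonneg_left _ (by positivity)
        -- -(1/C) ψ² + C ≤ -(1/C) z² + C since z² ≤ ψ²
          have hsq : (z u)^2 ≤ (ψ u)^2 := by nlinarith
          have : (1/C) * (z u)^2 ≤ (1/C) * (ψ u)^2 :=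
            mul_le_mul_of_nonneg_left hsq (by positivity)
          linarith
        linarith
    have := hant ⟨le_refl s, hst₁⟩ ⟨hst₁, le_refl t₁⟩ hst₁
    simp only at this
    rw [hzt₁] at this
    linarith
  -- Final contradiction: z blows up as r → a⁺ but ψ is bounded
  have hIcc_sub : Set.Icc a t₁ ⊆ Set.Ioc (0:ℝ) T := fun u hu =>
    ⟨lt_of_lt_of_le hapos hu.1, le_trans hu.2 ht₁T⟩
  have hψcont : ContinuousOn ψ (Set.Icc a t₁) := fun u hu =>
    ((hderiv u (hIcc_sub hu)).continuousAt).continuousWithinAt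
  obtain ⟨M, hM⟩ := isCompact_Icc.exists_bound_of_continuousOn hψcont
  have hM0 : 0 ≤ M := le_trans (norm_nonneg _) (hM a ⟨le_refl a, hat₁.le⟩)
  set δ : ℝ := min (C * k / (M + 1)) ((t₁^2 - k) / 2) with hδ
  have hδpos : 0 < δ := lt_min (by positivity) (by linarith)
  have hδ1 : δ ≤ C * k / (M + 1) := min_le_left _ _
  have hδ2 : δ ≤ (t₁^2 - k) / 2 := min_le_right _ _
  clear_value δ
  set r : ℝ := Real.sqrt (k + δ) with hr
  have hrsq : r^2 = k + δ := Real.sq_sqrt (by linarith)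
  have hra : a < r := by
    rw [ha, hr]
    exact Real.sqrt_lt_sqrt hkpos.le (by linarith)
  have hrt₁ : r ≤ t₁ := by
    have h1 : r^2 < t₁^2 := by
      rw [hrsq]
      linarith
    nlinarith [Real.sqrt_nonneg (k + δ)]
  clear_value r
  have hzr : M < z r := by
    have hM1 : (0:ℝ) < M + 1 := by linarith
    have h1 : δ * (M + 1) ≤ C * k := by
      rw [div_eq_mul_inv] at hδ1
      calc δ * (M + 1) ≤ C * k * (M+1)⁻¹ * (M + 1) :=
            mul_le_mul_of_nonneg_right hδ1 hM1.le
        _ = C * k := by field_simp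
    clear hineq hderiv claimA hzderiv hzpos hzt₁ hM
    simp only [hz]
    rw [hrsq]
    have h2 : k + δ - k = δ := by ring
    rw [h2]
    rw [lt_div_iff₀ hδpos]
    have hCδ : 0 < C * δ := by positivity
    have hCk : 0 < C * k := by positivity
    linarith [h1, hCδ, hCk, hδpos]
  have hzψ : z r < ψ r := claimA r ⟨hra, hrt₁⟩
  have hψM : ψ r ≤ M := le_trans (le_abs_self _) (hM r ⟨hra.le, hrt₁⟩)
  linarith

/-- the scalar ODE comparison behind the cutoff argument. If
`ψ' ≤ t⁻¹(-C⁻¹ψ² + C)` on `(0,T]` with `ψ ≥ 0`, then `ψ(t) ≤ max(ψ(t₀), C)` for `t ≥ t₀`;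
and if moreover `ψ(t)·t → 0` as `t → 0⁺`, then `ψ ≤ max(C, √(C² + C/log 2))` on `(0,T]`. -/
theorem stmt17 (T C : ℝ) (hT : 0 < T) (hC : 0 < C)
    (ψ ψ' : ℝ → ℝ)
    (hpos : ∀ t ∈ Set.Ioc (0:ℝ) T, 0 ≤ ψ t)
    (hderiv : ∀ t ∈ Set.Ioc (0:ℝ) T, HasDerivAt ψ (ψ' t) t)
    (hineq : ∀ t ∈ Set.Ioc (0:ℝ) T, ψ' t ≤ (1/t) * (-(1/C) * (ψ t)^2 + C)) :
    (∀ t₀ ∈ Set.Ioc (0:ℝ) T, ∀ t ∈ Set.Icc t₀ T, ψ t ≤ max (ψ t₀) C) ∧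
      (Filter.Tendsto (fun t => ψ t * t) (nhdsWithin 0 (Set.Ioi 0)) (nhds 0) →
        ∀ t ∈ Set.Ioc (0:ℝ) T, ψ t ≤ max C (Real.sqrt (C^2 + C / Real.log 2))) := by
  have key := stmt17_key T C hT hC ψ ψ' hderiv hineq
  constructor
  · intro t₀ ht₀ t ht
    have : t ∈ Set.Ioc (0:ℝ) T := ⟨lt_of_lt_of_le ht₀.1 ht.1, ht.2⟩
    exact le_trans (key t this) (le_max_right _ _)
  · intro _ t ht
    exact le_trans (key t ht) (le_max_left _ _)
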